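/- Let R be a commutative Bezout domain and S = S(R) the saturated multiplicative set of elements a with R/aR of stable range 1. Then R is an elementary divisor ring if and only if the localization R_S is an elementary divisor ring. -/

import Mathlib

def HasStableRange1 (R : Type*) [CommRing R] : Prop :=
  ∀ a b : R, Ideal.span {a, b} = ⊤ → ∃ t : R, IsUnit (a + b * t)

def IsElementaryDivisorRing (R : Type*) [CommRing R] : Prop :=
  ∀ a b c : R, Ideal.span {a, b, c} = ⊤ →
    ∃ p q : R, Ideal.span {a * p, b * p + c * q} = ⊤

/-!
The elementary divisor condition passes to any localization of a Bezout domain: clear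
denominators, divide the triple by its gcd, solve in `R` and map back.

Conversely, a solution `(P, Q)` over `R_S` yields `p, q ∈ R` such that the ideal
`(a p, b p + c q)` contains some `z ∈ S`. Dividing `(p, q)` by its gcd and completing it to an
invertible matrix transforms `[[a, 0], [b, c]]` into `[[d, e], [0, h]]`, where
`d = gcd(a p, b p + c q)` divides `z`. Hence `R/dR`, a quotient of `R/zR`, has stable range 1,
which gives `λ` with `d` and `e + h λ` coprime, and this solves the transformed problem.
-/

open Ideal

section CommRing

variable {R : Type*} [CommRing R]

theorem span_pair_eq_top_iff_isCoprime {a b : R} :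
    span ({a, b} : Set R) = ⊤ ↔ IsCoprime a b := by
  rw [eq_top_iff_one, mem_span_pair]
  rfl

theorem span_triple_eq_top_iff {a b c : R} :
    span ({a, b, c} : Set R) = ⊤ ↔ ∃ x y z : R, x * a + y * b + z * c = 1 := by
  rw [eq_top_iff_one, mem_span_insert]
  constructor
  · rintro ⟨x, _, hbc, h⟩
    obtain ⟨y, z, rfl⟩ := mem_span_pair.mp hbc
    exact ⟨x, y, z, by linear_combination -h⟩
  · rintro ⟨x, y, z, h⟩
    exact ⟨x, y * b + z * c, mem_span_pair.mpr ⟨y, z, rfl⟩, by linear_combination -h⟩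

theorem isCoprime_of_isUnit_quotient_mk {d x : R}
    (h : IsUnit (Ideal.Quotient.mk (span {d}) x)) : IsCoprime d x := by
  obtain ⟨s, hs⟩ := h.exists_left_inv
  obtain ⟨s, rfl⟩ := Ideal.Quotient.mk_surjective s
  rw [← map_mul, ← map_one (Ideal.Quotient.mk _), Ideal.Quotient.eq, mem_span_singleton'] at hs
  obtain ⟨m, hm⟩ := hs
  exact ⟨-m, s, by linear_combination -hm⟩

theorem HasStableRange1.of_surjective {A B : Type*} [CommRing A] [CommRing B] {f : A →+* B}
    (hf : Function.Surjective f) (h : HasStableRange1 A) : HasStableRange1 B := by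
  intro b₁ b₂ hb
  obtain ⟨u, v, huv⟩ := span_pair_eq_top_iff_isCoprime.mp hb
  obtain ⟨a₁, rfl⟩ := hf b₁
  obtain ⟨a₂, rfl⟩ := hf b₂
  obtain ⟨u, rfl⟩ := hf u
  obtain ⟨v, rfl⟩ := hf v
  -- `(a₁, v a₂)` need not be unimodular in `A`; adding an element of `ker f` makes it so.
  set e := 1 - (u * a₁ + v * a₂)
  have he : f e = 0 := by simp only [e, map_sub, map_add, map_mul, map_one, huv, sub_self]
  obtain ⟨t, ht⟩ :=
    h a₁ (v * a₂ + e) (span_pair_eq_top_iff_isCoprime.mpr ⟨u, 1, by ring⟩)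
  refine ⟨f (v * t), ?_⟩
  convert ht.map f using 1
  simp only [map_add, map_mul, he]
  ring

theorem HasStableRange1.quotient_of_dvd {d z : R} (hdz : d ∣ z)
    (h : HasStableRange1 (R ⧸ span {z})) : HasStableRange1 (R ⧸ span {d}) :=
  h.of_surjective (Ideal.Quotient.factor_surjective (span_singleton_le_span_singleton.mpr hdz))

theorem HasStableRange1.exists_isCoprime_add_mul {d b c : R}
    (h : HasStableRange1 (R ⧸ span {d})) (hdbc : span ({d, b, c} : Set R) = ⊤) :
    ∃ t : R, IsCoprime d (b + c * t) := by
  obtain ⟨x, y, z, hxyz⟩ := span_triple_eq_top_iff.mp hdbc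
  have hd : Ideal.Quotient.mk (span {d}) d = 0 :=
    Ideal.Quotient.eq_zero_iff_mem.mpr (mem_span_singleton_self d)
  have hbc : span {Ideal.Quotient.mk (span {d}) b, Ideal.Quotient.mk (span {d}) c} = ⊤ :=
    span_pair_eq_top_iff_isCoprime.mpr ⟨Ideal.Quotient.mk _ y, Ideal.Quotient.mk _ z, by
      simpa only [map_add, map_mul, map_one, hd, mul_zero, zero_add] using
        congrArg (Ideal.Quotient.mk (span {d})) hxyz⟩
  obtain ⟨t, ht⟩ := h _ _ hbc
  obtain ⟨t, rfl⟩ := Ideal.Quotient.mk_surjective t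
  exact ⟨t, isCoprime_of_isUnit_quotient_mk (by simpa only [map_add, map_mul] using ht)⟩

/-- The condition of the elementary divisor criterion for the matrix `[[a, 0], [b, c]]`. -/
def KaplanskySolvable (a b c : R) : Prop :=
  ∃ p q : R, IsCoprime (a * p) (b * p + c * q)

theorem isElementaryDivisorRing_iff :
    IsElementaryDivisorRing R ↔
      ∀ a b c : R, span ({a, b, c} : Set R) = ⊤ → KaplanskySolvable a b c := by
  simp only [IsElementaryDivisorRing, KaplanskySolvable, span_pair_eq_top_iff_isCoprime]

theorem KaplanskySolvable.map {R' : Type*} [CommRing R'] (f : R →+* R') {a b c : R}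
    (h : KaplanskySolvable a b c) : KaplanskySolvable (f a) (f b) (f c) := by
  obtain ⟨p, q, h⟩ := h
  exact ⟨f p, f q, by simpa only [map_add, map_mul] using h.map f⟩

theorem kaplanskySolvable_mul_units_iff {a b c u v w : R} (hu : IsUnit u) (hv : IsUnit v)
    (hw : IsUnit w) : KaplanskySolvable (a * u) (b * v) (c * w) ↔ KaplanskySolvable a b c := by
  constructor
  · rintro ⟨p, q, h⟩
    refine ⟨v * p, w * q, ?_⟩
    rw [show a * (v * p) = a * p * v by ring, isCoprime_mul_unit_right_left hv,
      ← isCoprime_mul_unit_right_left hu]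
    convert h using 1 <;> ring
  · rintro ⟨p, q, h⟩
    refine ⟨w * p, v * q, ?_⟩
    rw [show a * u * (w * p) = a * p * (u * w) by ring,
      show b * v * (w * p) + c * w * (v * q) = (b * p + c * q) * (v * w) by ring,
      isCoprime_mul_units_right (hu.mul hw) (hv.mul hw)]
    exact h

/-- With `k p + l q = 1` and `x A + y B = 1`, the invertible matrices `[[p, -l], [q, k]]` (on the
right) and `[[x, y], [-B, A]]` (on the left) transform `[[a, 0], [b, c]]` into `[[d, e], [0, h]]`,
which stable range 1 of `R/dR` solves with first entry `1`. -/
theorem kaplanskySolvable_of_column_reduction {a b c p q k l d A B x y : R}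
    (hkl : k * p + l * q = 1) (hA : a * p = d * A) (hB : b * p + c * q = d * B)
    (hxy : x * A + y * B = 1) (hd : HasStableRange1 (R ⧸ span {d}))
    (habc : span ({a, b, c} : Set R) = ⊤) : KaplanskySolvable a b c := by
  set e := y * (c * k - b * l) - x * (a * l)
  set h := A * (c * k - b * l) + B * (a * l)
  have ha : a = A * d * k - q * (A * e - y * h) := by
    linear_combination (k * (A * x + B * y)) * hA + (k * A * d - a * (p * k + q * l)) * hxy +
      (-a) * hkl
  have hb : b = B * d * k - q * (B * e + x * h) := by
    linear_combination (k * (A * x + B * y)) * hB + (B * k * d - b * (p * k + q * l)) * hxy +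
      (-b) * hkl
  have hc : c = B * d * l + p * (B * e + x * h) := by
    linear_combination (l * (A * x + B * y)) * hB + (B * l * d - c * (p * k + q * l)) * hxy +
      (-c) * hkl
  have hdeh : span ({d, e, h} : Set R) = ⊤ := by
    obtain ⟨r, s, t, hrst⟩ := span_triple_eq_top_iff.mp habc
    exact span_triple_eq_top_iff.mpr
      ⟨r * A * k + s * B * k + t * B * l, -(r * q * A) - s * q * B + t * p * B,
        r * q * y - s * q * x + t * p * x, by linear_combination hrst - r * ha - s * hb - t * hc⟩
  obtain ⟨lam, X, Y, hXY⟩ := hd.exists_isCoprime_add_mul hdeh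
  refine ⟨p * X - l * Y, q * X + k * Y, x - lam * B, y + lam * A, ?_⟩
  linear_combination (X * (x - lam * B)) * hA + (X * (y + lam * A)) * hB + (X * d) * hxy + hXY

variable {L : Type*} [CommRing L] [Algebra R L]

theorem IsLocalization.exists_mem_span_of_isCoprime (S : Submonoid R) [IsLocalization S L]
    {x y : R} (h : IsCoprime (algebraMap R L x) (algebraMap R L y)) :
    ∃ z ∈ S, z ∈ span ({x, y} : Set R) := by
  have htop : (span ({x, y} : Set R)).map (algebraMap R L) = ⊤ := by
    rw [map_span, Set.image_pair, span_pair_eq_top_iff_isCoprime]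
    exact h
  exact Set.not_disjoint_iff.mp fun hdisj =>
    (IsLocalization.map_algebraMap_ne_top_iff_disjoint S L _).mpr hdisj htop

end CommRing

section BezoutDomain

variable {R : Type*} [CommRing R] [IsDomain R] [IsBezout R]

theorem IsBezout.exists_eq_mul_isCoprime (x y : R) :
    ∃ g x₀ y₀ : R, x = g * x₀ ∧ y = g * y₀ ∧ IsCoprime x₀ y₀ := by
  by_cases hg : IsBezout.gcd x y = 0
  · have hx : x = 0 := zero_dvd_iff.mp (hg ▸ IsBezout.gcd_dvd_left x y)
    have hy : y = 0 := zero_dvd_iff.mp (hg ▸ IsBezout.gcd_dvd_right x y)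
    exact ⟨0, 1, 0, by rw [hx, zero_mul], by rw [hy, zero_mul], isCoprime_one_left⟩
  obtain ⟨x₀, hx⟩ := IsBezout.gcd_dvd_left x y
  obtain ⟨y₀, hy⟩ := IsBezout.gcd_dvd_right x y
  obtain ⟨k, l, hkl⟩ := IsBezout.gcd_eq_sum x y
  refine ⟨_, x₀, y₀, hx, hy, k, l, mul_left_cancel₀ hg ?_⟩
  linear_combination hkl - k * hx - l * hy

theorem IsBezout.exists_eq_mul_span_eq_top (a b c : R) :
    ∃ g a₀ b₀ c₀ : R, a = g * a₀ ∧ b = g * b₀ ∧ c = g * c₀ ∧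
      span ({a₀, b₀, c₀} : Set R) = ⊤ := by
  obtain ⟨g₁, b₁, c₁, rfl, rfl, k₁, l₁, h₁⟩ := exists_eq_mul_isCoprime b c
  obtain ⟨g, a₀, g₀, rfl, rfl, k, l, h⟩ := exists_eq_mul_isCoprime a g₁
  exact ⟨g, a₀, g₀ * b₁, g₀ * c₁, rfl, by ring, by ring, span_triple_eq_top_iff.mpr
    ⟨k, l * k₁, l * l₁, by linear_combination h + (l * g₀) * h₁⟩⟩

theorem kaplanskySolvable_of_mem_span {a b c p q z : R}
    (hz : z ∈ span ({a * p, b * p + c * q} : Set R)) (hsr : HasStableRange1 (R ⧸ span {z}))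
    (habc : span ({a, b, c} : Set R) = ⊤) : KaplanskySolvable a b c := by
  obtain ⟨g, p₀, q₀, rfl, rfl, k, l, hkl⟩ := IsBezout.exists_eq_mul_isCoprime p q
  obtain ⟨d, A, B, hA, hB, x, y, hxy⟩ :=
    IsBezout.exists_eq_mul_isCoprime (a * p₀) (b * p₀ + c * q₀)
  have hdz : d ∣ z := by
    obtain ⟨u, v, rfl⟩ := mem_span_pair.mp hz
    exact ⟨g * (u * A + v * B), by linear_combination (u * g) * hA + (v * g) * hB⟩
  exact kaplanskySolvable_of_column_reduction hkl hA hB hxy (hsr.quotient_of_dvd hdz) habc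

variable {L : Type*} [CommRing L] [Algebra R L]

theorem IsElementaryDivisorRing.isLocalization (S : Submonoid R) [IsLocalization S L]
    (h : IsElementaryDivisorRing R) : IsElementaryDivisorRing L := by
  rw [isElementaryDivisorRing_iff] at h ⊢
  intro A B C hABC
  obtain ⟨⟨a, sa⟩, ha⟩ := IsLocalization.surj S A
  obtain ⟨⟨b, sb⟩, hb⟩ := IsLocalization.surj S B
  obtain ⟨⟨c, sc⟩, hc⟩ := IsLocalization.surj S C
  obtain ⟨g, a₀, b₀, c₀, rfl, rfl, rfl, h₀⟩ := IsBezout.exists_eq_mul_span_eq_top a b c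
  have hg : IsUnit (algebraMap R L g) := by
    have hdvd {X : L} {s : S} {x : R} (hX : X * algebraMap R L s = algebraMap R L (g * x)) :
        algebraMap R L g ∣ X :=
      ((IsLocalization.map_units L s).dvd_mul_right).mp ⟨algebraMap R L x, by rw [hX, map_mul]⟩
    obtain ⟨x, y, z, hxyz⟩ := span_triple_eq_top_iff.mp hABC
    exact isUnit_of_dvd_one (hxyz ▸ dvd_add (dvd_add ((hdvd ha).mul_left x)
      ((hdvd hb).mul_left y)) ((hdvd hc).mul_left z))
  rw [← kaplanskySolvable_mul_units_iff (IsLocalization.map_units L sa)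
    (IsLocalization.map_units L sb) (IsLocalization.map_units L sc), ha, hb, hc]
  simpa only [map_mul, mul_comm _ (algebraMap R L g)] using
    (kaplanskySolvable_mul_units_iff hg hg hg).mpr ((h a₀ b₀ c₀ h₀).map (algebraMap R L))

theorem IsElementaryDivisorRing.of_isLocalization (S : Submonoid R) [IsLocalization S L]
    (hS : ∀ z ∈ S, HasStableRange1 (R ⧸ span {z})) (h : IsElementaryDivisorRing L) :
    IsElementaryDivisorRing R := by
  rw [isElementaryDivisorRing_iff] at h ⊢
  intro a b c habc
  set f := algebraMap R L
  have hL : span ({f a, f b, f c} : Set L) = ⊤ := by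
    rw [← Set.image_pair, ← Set.image_insert_eq, ← map_span, habc, Ideal.map_top]
  obtain ⟨P, Q, hPQ⟩ := h _ _ _ hL
  obtain ⟨p, q, s, hp, hq⟩ := IsLocalization.surj₂ S L P Q
  have hpq : IsCoprime (f (a * p)) (f (b * p + c * q)) := by
    rw [map_mul, map_add, map_mul, map_mul, ← hp, ← hq]
    convert (isCoprime_mul_unit_right (IsLocalization.map_units L s) _ _).mpr hPQ using 1 <;> ring
  obtain ⟨z, hzS, hz⟩ := IsLocalization.exists_mem_span_of_isCoprime S hpq
  exact kaplanskySolvable_of_mem_span hz (hS z hzS) habc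

end BezoutDomain

theorem stmt14 {R : Type*} [CommRing R] [IsDomain R] [IsBezout R]
    (S : Submonoid R)
    (hS : ∀ a : R, a ∈ S ↔ HasStableRange1 (R ⧸ Ideal.span ({a} : Set R))) :
    IsElementaryDivisorRing R ↔ IsElementaryDivisorRing (Localization S) :=
  ⟨IsElementaryDivisorRing.isLocalization S,
    IsElementaryDivisorRing.of_isLocalization S fun z hz => (hS z).mp hz⟩
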